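/- Let p be a positive integer, γ > 0, let g, h : ℝ^p → ℝ be convex, and let f : ℝ^p → ℝ be differentiable with gradient ∇f. Let y ∈ ℝ^p, let (x, z) be a three-operator splitting step from y, set y⁺ = y − x + z, and let (x⁺, z⁺) be a three-operator splitting step from y⁺. With G(y) = (x − z)/γ and G(y⁺) = (x⁺ − z⁺)/γ, it holds that ‖G(y⁺)‖² ≤ ‖G(y)‖² − ‖G(y⁺) − G(y)‖² − (2/γ)·⟨∇f(x) − ∇f(x⁺), z − z⁺⟩. -/

import Mathlib

/-!
A proximal point `x` of a convex `φ` at `y` satisfies the optimality condition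
`(y - x) / γ ∈ ∂φ(x)`, so the proximal residuals `y - x` are monotone in `x`. Apply this to the
`g`-steps and to the `h`-steps from `y` and from `y⁺`: with `a = x - z`, `d = x - x⁺`,
`e = z - z⁺` and `Δ = ∇f(x) - ∇f(x⁺)` it gives `0 ≤ ⟪a - d, d⟫` and
`0 ≤ ⟪2d - a - γΔ - e, e⟫`, since `y - y⁺ = a`. As `x⁺ - z⁺ = a - d + e`, twice the sum of the
two inequalities is the claim multiplied by `γ²`.
-/

open RealInnerProductSpace

/-- `x` is a proximal point of `φ` at `y` with parameter `γ`:
it minimizes `u ↦ φ u + (1/(2γ)) ‖u - y‖²`. -/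
def IsProxPt {p : ℕ} (γ : ℝ) (φ : EuclideanSpace ℝ (Fin p) → ℝ)
    (y x : EuclideanSpace ℝ (Fin p)) : Prop :=
  ∀ u : EuclideanSpace ℝ (Fin p),
    φ x + (1 / (2 * γ)) * ‖x - y‖ ^ 2 ≤ φ u + (1 / (2 * γ)) * ‖u - y‖ ^ 2

/-- `(x, z)` is a three-operator splitting step from `y`. -/
def IsSplitStep {p : ℕ} (γ : ℝ) (g h f : EuclideanSpace ℝ (Fin p) → ℝ)
    (y x z : EuclideanSpace ℝ (Fin p)) : Prop :=
  IsProxPt γ g y x ∧ IsProxPt γ h ((2 : ℝ) • x - y - γ • gradient f x) z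

/-- `f` is `L`-smooth: differentiable with `L`-Lipschitz gradient. -/
def LSmooth {p : ℕ} (L : ℝ) (f : EuclideanSpace ℝ (Fin p) → ℝ) : Prop :=
  Differentiable ℝ f ∧ ∀ a b : EuclideanSpace ℝ (Fin p),
    ‖gradient f a - gradient f b‖ ≤ L * ‖a - b‖

/-- `u` is a subgradient of `φ` at `x`. -/
def IsSubgradient {p : ℕ} (φ : EuclideanSpace ℝ (Fin p) → ℝ)
    (x u : EuclideanSpace ℝ (Fin p)) : Prop :=
  ∀ w : EuclideanSpace ℝ (Fin p), φ w ≥ φ x + ⟪u, w - x⟫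

open Set Filter Topology

section InnerProductSpace

variable {E : Type*} [NormedAddCommGroup E] [InnerProductSpace ℝ E]

/-- Optimality condition of the proximal problem, obtained by comparing `x` with the points
`x + t • (w - x)` of the segment to `w` and letting `t → 0⁺`. -/
theorem ConvexOn.add_inner_le_of_isMinOn_add_norm_sub_sq {φ : E → ℝ}
    (hφ : ConvexOn ℝ univ φ) {γ : ℝ} {y x : E}
    (hx : IsMinOn (fun u => φ u + (1 / (2 * γ)) * ‖u - y‖ ^ 2) univ x) (w : E) :
    φ x + ⟪γ⁻¹ • (y - x), w - x⟫ ≤ φ w := by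
  have hsegment : ∀ t ∈ Ioc (0 : ℝ) 1,
      φ x + ⟪γ⁻¹ • (y - x), w - x⟫ ≤ φ w + t * (‖w - x‖ ^ 2 / (2 * γ)) := by
    rintro t ⟨ht0, ht1⟩
    have hconv : φ (x + t • (w - x)) ≤ (1 - t) * φ x + t * φ w := by
      have := hφ.2 (mem_univ x) (mem_univ w) (sub_nonneg.2 ht1) ht0.le (sub_add_cancel 1 t)
      rwa [show (1 - t) • x + t • w = x + t • (w - x) by module] at this
    have hmin : φ x + 1 / (2 * γ) * ‖x - y‖ ^ 2
        ≤ φ (x + t • (w - x)) + 1 / (2 * γ) * ‖x + t • (w - x) - y‖ ^ 2 := hx (mem_univ _)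
    have hexpand : ‖x + t • (w - x) - y‖ ^ 2
        = ‖x - y‖ ^ 2 + 2 * t * ⟪x - y, w - x⟫ + t ^ 2 * ‖w - x‖ ^ 2 := by
      rw [show x + t • (w - x) - y = (x - y) + t • (w - x) by abel, norm_add_sq_real,
        inner_smul_right, norm_smul, mul_pow, Real.norm_eq_abs, sq_abs]
      ring
    rw [hexpand] at hmin
    rw [real_inner_smul_left, ← neg_sub x y, inner_neg_left]
    refine le_of_mul_le_mul_left ?_ ht0
    linear_combination hmin + hconv
  have hlim : Tendsto (fun t : ℝ => φ w + t * (‖w - x‖ ^ 2 / (2 * γ))) (𝓝[>] 0) (𝓝 (φ w)) := by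
    refine Tendsto.mono_left ?_ nhdsWithin_le_nhds
    exact (continuous_const.add (continuous_id.mul continuous_const)).tendsto' _ _ (by simp)
  exact ge_of_tendsto hlim (mem_of_superset (Ioc_mem_nhdsGT one_pos) hsegment)

theorem norm_sq_le_of_inner_nonneg {a b d e v : E} (hb : b = a - d + e)
    (hd : 0 ≤ ⟪a - d, d⟫) (he : 0 ≤ ⟪(2 : ℝ) • d - a - v - e, e⟫) :
    ‖b‖ ^ 2 ≤ ‖a‖ ^ 2 - ‖b - a‖ ^ 2 - 2 * ⟪v, e⟫ := by
  rw [hb, show a - d + e - a = e - d by abel, norm_add_sq_real, norm_sub_sq_real,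
    norm_sub_sq_real]
  simp only [inner_sub_left, real_inner_smul_left, real_inner_self_eq_norm_sq] at hd he ⊢
  linarith [real_inner_comm a d, real_inner_comm d e, real_inner_comm a e]

end InnerProductSpace

section EuclideanSpace

variable {p : ℕ} {φ : EuclideanSpace ℝ (Fin p) → ℝ}

theorem IsProxPt.isSubgradient {γ : ℝ} {y x : EuclideanSpace ℝ (Fin p)}
    (hφ : ConvexOn ℝ univ φ) (hx : IsProxPt γ φ y x) : IsSubgradient φ x (γ⁻¹ • (y - x)) :=
  hφ.add_inner_le_of_isMinOn_add_norm_sub_sq fun u _ => hx u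

theorem IsSubgradient.inner_sub_nonneg {x x' u u' : EuclideanSpace ℝ (Fin p)}
    (hu : IsSubgradient φ x u) (hu' : IsSubgradient φ x' u') : 0 ≤ ⟪u - u', x - x'⟫ := by
  have h := hu x'
  have h' := hu' x
  rw [← neg_sub x x', inner_neg_right] at h
  rw [inner_sub_left]
  linarith

theorem IsProxPt.inner_sub_nonneg {γ : ℝ} (hγ : 0 < γ) (hφ : ConvexOn ℝ univ φ)
    {y x y' x' : EuclideanSpace ℝ (Fin p)} (hx : IsProxPt γ φ y x) (hx' : IsProxPt γ φ y' x') :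
    0 ≤ ⟪(y - x) - (y' - x'), x - x'⟫ := by
  have := (hx.isSubgradient hφ).inner_sub_nonneg (hx'.isSubgradient hφ)
  rw [← smul_sub, real_inner_smul_left] at this
  exact nonneg_of_mul_nonneg_right this (inv_pos.2 hγ)

end EuclideanSpace

theorem stmt_10_general (p : ℕ) (γ : ℝ) (hγ : 0 < γ)
    (g h f : EuclideanSpace ℝ (Fin p) → ℝ)
    (hg : ConvexOn ℝ Set.univ g) (hh : ConvexOn ℝ Set.univ h)
    (y x z yplus xplus zplus : EuclideanSpace ℝ (Fin p))
    (hstep : IsSplitStep γ g h f y x z)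
    (hyplus : yplus = y - x + z)
    (hstepplus : IsSplitStep γ g h f yplus xplus zplus) :
    ‖γ⁻¹ • (xplus - zplus)‖ ^ 2 ≤
      ‖γ⁻¹ • (x - z)‖ ^ 2 - ‖γ⁻¹ • (xplus - zplus) - γ⁻¹ • (x - z)‖ ^ 2 -
        (2 / γ) * ⟪gradient f x - gradient f xplus, z - zplus⟫ := by
  subst hyplus
  have hg_mono := hstep.1.inner_sub_nonneg hγ hg hstepplus.1
  have hh_mono := hstep.2.inner_sub_nonneg hγ hh hstepplus.2
  have key := norm_sq_le_of_inner_nonneg (a := x - z) (b := xplus - zplus) (d := x - xplus)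
    (e := z - zplus) (v := γ • (gradient f x - gradient f xplus)) (by abel)
    (by convert hg_mono using 2; abel) (by convert hh_mono using 2; module)
  rw [real_inner_smul_left] at key
  simp only [← smul_sub, norm_smul, mul_pow, norm_inv, Real.norm_eq_abs, inv_pow, sq_abs]
  have := mul_le_mul_of_nonneg_left key (inv_nonneg.2 (sq_nonneg γ))
  refine this.trans_eq ?_
  field_simp

/-- one-step inequality for the gradient mapping. -/
theorem stmt_10 (p : ℕ) (hp : 0 < p) (γ : ℝ) (hγ : 0 < γ)
    (g h f : EuclideanSpace ℝ (Fin p) → ℝ)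
    (hg : ConvexOn ℝ Set.univ g) (hh : ConvexOn ℝ Set.univ h)
    (hf : Differentiable ℝ f)
    (y x z yplus xplus zplus : EuclideanSpace ℝ (Fin p))
    (hstep : IsSplitStep γ g h f y x z)
    (hyplus : yplus = y - x + z)
    (hstepplus : IsSplitStep γ g h f yplus xplus zplus) :
    ‖γ⁻¹ • (xplus - zplus)‖ ^ 2 ≤
      ‖γ⁻¹ • (x - z)‖ ^ 2 - ‖γ⁻¹ • (xplus - zplus) - γ⁻¹ • (x - z)‖ ^ 2 -
        (2 / γ) * ⟪gradient f x - gradient f xplus, z - zplus⟫ :=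
  stmt_10_general p γ hγ g h f hg hh y x z yplus xplus zplus hstep hyplus hstepplus
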